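/- arXiv:1910.02123 — 3 statements merged into one kernel-verified Lean document; each statement's English description precedes it below -/
import Mathlib

section
/- Let G' be a graph obtained from a finite graph G by a single vertex split at a vertex v. Then the maximum matching number of G' equals the maximum matching number of G plus 1. -/
/-- The maximum size of a matching in a graph. -/
noncomputable def matchingNumber {V : Type*} (G : SimpleGraph V) : ℕ :=
  sSup {n | ∃ M : G.Subgraph, M.IsMatching ∧ M.edgeSet.ncard = n}

/-- `G'` is obtained from `G` by a vertex split at `v`: two new vertices `v'` and
`v''` are added, forming a pendant path `v v' v''`, and the edges `u v` with
`u ∈ S` are replaced by edges `u v''`. -/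
def IsVertexSplit {α β : Type*} (G : SimpleGraph α) (G' : SimpleGraph β) : Prop :=
  ∃ (f : α ↪ β) (v : α) (v' v'' : β) (S : Set α),
    S ⊆ G.neighborSet v ∧
    v' ≠ v'' ∧ v' ∉ Set.range f ∧ v'' ∉ Set.range f ∧
    Set.range f ∪ {v', v''} = Set.univ ∧
    (∀ u w : α, G'.Adj (f u) (f w) ↔
      (G.Adj u w ∧ ¬(u = v ∧ w ∈ S) ∧ ¬(w = v ∧ u ∈ S))) ∧
    (∀ u : α, G'.Adj (f u) v' ↔ u = v) ∧
    (∀ u : α, G'.Adj (f u) v'' ↔ u ∈ S) ∧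
    G'.Adj v' v''

/-!
Let `f` embed `G` into `G'`, with pendant path `f v — v' — v''`. Pushing a maximum matching of `G`
forward along `f` loses at most the edge `v u` with `u ∈ S`; it is replaced by `f u — v''`, and then
`f v — v'` (or `v' — v''` if nothing was lost) is added, so `ν(G') ≥ ν(G) + 1`. Conversely, the
edges of a matching `M'` of `G'` that lie inside `f(G)` pull back to a matching `P` of `G`, and the
other edges of `M'` pass through `v'` or `v''`, hence are at most two. If there are two, they are
`f v — v'` and `f b — v''` with `b ∈ S`, so `v` and `b` are unmatched in `P` and `P + v b` is a
matching of `G`; either way `|M'| ≤ ν(G) + 1`.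
-/

open Set

namespace SimpleGraph.Subgraph

variable {V W : Type*} {G : SimpleGraph V} {G' : SimpleGraph W} {M : G.Subgraph} {a b : V}

theorem IsMatching.subsingleton_setOf_mem_edgeSet (hM : M.IsMatching) (x : V) :
    {e ∈ M.edgeSet | x ∈ e}.Subsingleton := by
  have key : ∀ e ∈ M.edgeSet, x ∈ e → ∃ y, M.Adj x y ∧ e = s(x, y) := by
    rintro e he hx
    obtain ⟨y, rfl⟩ := Sym2.mem_iff_exists.mp hx
    exact ⟨y, he, rfl⟩
  rintro e₁ ⟨he₁, hx₁⟩ e₂ ⟨he₂, hx₂⟩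
  obtain ⟨y₁, hy₁, rfl⟩ := key e₁ he₁ hx₁
  obtain ⟨y₂, hy₂, rfl⟩ := key e₂ he₂ hx₂
  rw [hM.eq_of_adj_left hy₁ hy₂]

theorem IsMatching.sup_subgraphOfAdj (hM : M.IsMatching) (h : G.Adj a b) (ha : a ∉ M.verts)
    (hb : b ∉ M.verts) : (M ⊔ G.subgraphOfAdj h).IsMatching := by
  refine hM.sup (.subgraphOfAdj h) ?_
  rw [hM.support_eq_verts, support_subgraphOfAdj, disjoint_insert_right,
    disjoint_singleton_right]
  exact ⟨ha, hb⟩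

theorem ncard_edgeSet_sup_subgraphOfAdj [Finite V] (h : G.Adj a b) (ha : a ∉ M.verts) :
    (M ⊔ G.subgraphOfAdj h).edgeSet.ncard = M.edgeSet.ncard + 1 := by
  rw [edgeSet_sup, edgeSet_subgraphOfAdj, union_singleton,
    ncard_insert_of_notMem fun he => ha (M.mem_verts_of_mem_edge he (Sym2.mem_mk_left a b))]

theorem IsMatching.deleteVerts_of_adj (hM : M.IsMatching) (hab : M.Adj a b) :
    (M.deleteVerts {a, b}).IsMatching := by
  rintro x ⟨hx, hxab⟩
  obtain ⟨y, hxy, hy⟩ := hM hx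
  refine ⟨y, ⟨⟨hx, hxab⟩, ⟨M.edge_vert hxy.symm, ?_⟩, hxy⟩, fun z hz => hy z hz.2.2⟩
  rintro (h | h)
  · exact hxab (.inr (hM.eq_of_adj_left hab (h ▸ hxy.symm)).symm)
  · exact hxab (.inl (hM.eq_of_adj_right (h ▸ hxy) hab))

theorem IsMatching.edgeSet_deleteVerts_of_adj (hM : M.IsMatching) (hab : M.Adj a b) :
    (M.deleteVerts {a, b}).edgeSet = M.edgeSet \ {s(a, b)} := by
  ext e
  induction e using Sym2.ind with
  | _ x y =>
    simp only [Subgraph.mem_edgeSet, deleteVerts_adj, mem_sdiff, mem_singleton_iff, Sym2.eq_iff,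
      mem_insert_iff]
    grind [Subgraph.Adj.symm, Subgraph.edge_vert, IsMatching.eq_of_adj_left]

theorem IsMatching.ncard_edgeSet_deleteVerts_add_one [Finite V] (hM : M.IsMatching)
    (hab : M.Adj a b) : (M.deleteVerts {a, b}).edgeSet.ncard + 1 = M.edgeSet.ncard := by
  rw [hM.edgeSet_deleteVerts_of_adj hab,
    ncard_sdiff_singleton_add_one (show s(a, b) ∈ M.edgeSet from hab)]

theorem IsMatching.exists_map_embedding (f : V ↪ W) (hM : M.IsMatching)
    (hf : ∀ ⦃a b⦄, M.Adj a b → G'.Adj (f a) (f b)) :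
    ∃ M' : G'.Subgraph, M'.IsMatching ∧ M'.verts = f '' M.verts ∧
      M'.edgeSet.ncard = M.edgeSet.ncard := by
  let φ : M.spanningCoe →g G' := ⟨f, fun h => hf h⟩
  let N : M.spanningCoe.Subgraph := M.comap (Hom.ofLE M.spanningCoe_le)
  have hN : N.IsMatching := fun x hx => by simpa [N] using hM hx
  refine ⟨N.map φ, hN.map φ f.injective, rfl, ?_⟩
  rw [edgeSet_map]
  refine (ncard_image_of_injective _ (Sym2.map.injective f.injective)).trans ?_
  congr 1
  ext e
  induction e using Sym2.ind
  simp [N]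

theorem IsMatching.exists_comap_embedding (f : V ↪ W) {M' : G'.Subgraph} (hM' : M'.IsMatching)
    (hf : ∀ ⦃a b⦄, M'.Adj (f a) (f b) → G.Adj a b) :
    ∃ M : G.Subgraph, M.IsMatching ∧ (∀ a b, M.Adj a b ↔ M'.Adj (f a) (f b)) ∧
      M.edgeSet.ncard = (M'.edgeSet ∩ range (Sym2.map f)).ncard := by
  -- Unlike `Subgraph.comap`, keep only the vertices whose partner lies in the image of `f`.
  let M : G.Subgraph :=
    { verts := {a | ∃ b, M'.Adj (f a) (f b)}
      Adj a b := M'.Adj (f a) (f b)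
      adj_sub h := hf h
      edge_vert h := ⟨_, h⟩
      symm := ⟨fun _ _ h => h.symm⟩ }
  have hM : M.IsMatching := by
    rintro a ⟨b, hab⟩
    exact ⟨b, hab, fun c hac => f.injective (hM'.eq_of_adj_left hac hab)⟩
  have hedge : M.edgeSet = Sym2.map f ⁻¹' M'.edgeSet := by
    ext e
    induction e using Sym2.ind
    rfl
  refine ⟨M, hM, fun _ _ => Iff.rfl, ?_⟩
  rw [← image_preimage_eq_inter_range, hedge,
    ncard_image_of_injective _ (Sym2.map.injective f.injective)]

end SimpleGraph.Subgraph

section matchingNumber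

variable {V : Type*} {G : SimpleGraph V}

theorem nonempty_setOf_isMatching_ncard :
    {n | ∃ M : G.Subgraph, M.IsMatching ∧ M.edgeSet.ncard = n}.Nonempty :=
  ⟨0, ⊥, fun _ hv => hv.elim, by simp⟩

theorem matchingNumber_le_of_forall {n : ℕ}
    (h : ∀ M : G.Subgraph, M.IsMatching → M.edgeSet.ncard ≤ n) : matchingNumber G ≤ n :=
  csSup_le nonempty_setOf_isMatching_ncard fun _ ⟨M, hM, hn⟩ => hn ▸ h M hM

variable [Finite V]

theorem bddAbove_setOf_isMatching_ncard :
    BddAbove {n | ∃ M : G.Subgraph, M.IsMatching ∧ M.edgeSet.ncard = n} :=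
  ⟨G.edgeSet.ncard, fun _ ⟨M, _, hn⟩ => hn ▸ ncard_le_ncard M.edgeSet_subset⟩

theorem SimpleGraph.Subgraph.IsMatching.ncard_edgeSet_le_matchingNumber {M : G.Subgraph}
    (hM : M.IsMatching) : M.edgeSet.ncard ≤ matchingNumber G :=
  le_csSup bddAbove_setOf_isMatching_ncard ⟨M, hM, rfl⟩

theorem exists_isMatching_ncard_edgeSet_eq_matchingNumber (G : SimpleGraph V) :
    ∃ M : G.Subgraph, M.IsMatching ∧ M.edgeSet.ncard = matchingNumber G :=
  Nat.sSup_mem nonempty_setOf_isMatching_ncard bddAbove_setOf_isMatching_ncard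

end matchingNumber

structure VertexSplit {α β : Type*} (G : SimpleGraph α) (G' : SimpleGraph β) where
  emb : α ↪ β
  v : α
  v' : β
  v'' : β
  S : Set α
  subset_neighborSet : S ⊆ G.neighborSet v
  v'_ne_v'' : v' ≠ v''
  v'_notMem_range : v' ∉ range emb
  v''_notMem_range : v'' ∉ range emb
  range_union : range emb ∪ {v', v''} = univ
  adj_emb_emb :
    ∀ u w, G'.Adj (emb u) (emb w) ↔ G.Adj u w ∧ ¬(u = v ∧ w ∈ S) ∧ ¬(w = v ∧ u ∈ S)
  adj_emb_v' : ∀ u, G'.Adj (emb u) v' ↔ u = v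
  adj_emb_v'' : ∀ u, G'.Adj (emb u) v'' ↔ u ∈ S
  adj_v'_v'' : G'.Adj v' v''

theorem IsVertexSplit.nonempty {α β : Type*} {G : SimpleGraph α} {G' : SimpleGraph β}
    (h : IsVertexSplit G G') : Nonempty (VertexSplit G G') :=
  let ⟨f, v, v', v'', S, h₁, h₂, h₃, h₄, h₅, h₆, h₇, h₈, h₉⟩ := h
  ⟨⟨f, v, v', v'', S, h₁, h₂, h₃, h₄, h₅, h₆, h₇, h₈, h₉⟩⟩

namespace VertexSplit

open SimpleGraph Subgraph

variable {α β : Type*} {G : SimpleGraph α} {G' : SimpleGraph β} (s : VertexSplit G G')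

theorem finite [Finite α] (s : VertexSplit G G') : Finite β :=
  Finite.of_finite_univ (s.range_union ▸ (finite_range s.emb).union (toFinite _))

theorem eq_or_eq_of_notMem_range {x : β} (hx : x ∉ range s.emb) : x = s.v' ∨ x = s.v'' := by
  have : x ∈ range s.emb ∪ {s.v', s.v''} := s.range_union ▸ mem_univ x
  simpa [hx] using this

theorem mem_range_of_ne {x : β} (h' : x ≠ s.v') (h'' : x ≠ s.v'') : x ∈ range s.emb := by
  by_contra hx
  exact (s.eq_or_eq_of_notMem_range hx).elim h' h''

theorem emb_ne_v' {a : α} : s.emb a ≠ s.v' := fun h => s.v'_notMem_range ⟨a, h⟩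

theorem emb_ne_v'' {a : α} : s.emb a ≠ s.v'' := fun h => s.v''_notMem_range ⟨a, h⟩

theorem v'_notMem_image (t : Set α) : s.v' ∉ s.emb '' t :=
  fun h => s.v'_notMem_range (image_subset_range _ _ h)

theorem v''_notMem_image (t : Set α) : s.v'' ∉ s.emb '' t :=
  fun h => s.v''_notMem_range (image_subset_range _ _ h)

theorem adj_of_adj_emb {u w : α} (h : G'.Adj (s.emb u) (s.emb w)) : G.Adj u w :=
  ((s.adj_emb_emb u w).1 h).1

theorem edgeSet_sdiff_range_subset (M' : G'.Subgraph) :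
    M'.edgeSet \ range (Sym2.map s.emb) ⊆
      {e ∈ M'.edgeSet | s.v' ∈ e} ∪ {e ∈ M'.edgeSet | s.v'' ∈ e} := by
  rintro e ⟨he, hrange⟩
  obtain ⟨x, hxe, hx⟩ : ∃ x ∈ e, x ∉ range s.emb := by
    induction e using Sym2.ind with
    | _ x y =>
      by_contra! h
      obtain ⟨a, rfl⟩ := h x (Sym2.mem_mk_left x y)
      obtain ⟨b, rfl⟩ := h y (Sym2.mem_mk_right _ y)
      exact hrange ⟨s(a, b), rfl⟩
  rcases s.eq_or_eq_of_notMem_range hx with rfl | rfl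
  exacts [.inl ⟨he, hxe⟩, .inr ⟨he, hxe⟩]

theorem ncard_edgeSet_sdiff_range_le_two [Finite β] {M' : G'.Subgraph} (hM' : M'.IsMatching) :
    (M'.edgeSet \ range (Sym2.map s.emb)).ncard ≤ 2 :=
  calc _ ≤ ({e ∈ M'.edgeSet | s.v' ∈ e} ∪ {e ∈ M'.edgeSet | s.v'' ∈ e}).ncard :=
        ncard_le_ncard (s.edgeSet_sdiff_range_subset M')
    _ ≤ _ + _ := ncard_union_le _ _
    _ ≤ 1 + 1 := add_le_add
        (ncard_le_one_iff_subsingleton.2 (hM'.subsingleton_setOf_mem_edgeSet _))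
        (ncard_le_one_iff_subsingleton.2 (hM'.subsingleton_setOf_mem_edgeSet _))

theorem exists_adj_of_nontrivial {M' : G'.Subgraph} (hM' : M'.IsMatching)
    (hB : (M'.edgeSet \ range (Sym2.map s.emb)).Nontrivial) :
    M'.Adj (s.emb s.v) s.v' ∧ ∃ b ∈ s.S, M'.Adj (s.emb b) s.v'' := by
  have hv' := hM'.subsingleton_setOf_mem_edgeSet s.v'
  have hv'' := hM'.subsingleton_setOf_mem_edgeSet s.v''
  obtain ⟨e₁, he₁, e₂, he₂, h₁, h₂, hne⟩ : ∃ e₁ ∈ M'.edgeSet, ∃ e₂ ∈ M'.edgeSet,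
      s.v' ∈ e₁ ∧ s.v'' ∈ e₂ ∧ e₁ ≠ e₂ := by
    obtain ⟨e₁, he₁, e₂, he₂, hne⟩ := hB
    rcases s.edgeSet_sdiff_range_subset M' he₁ with h₁ | h₁ <;>
      rcases s.edgeSet_sdiff_range_subset M' he₂ with h₂ | h₂
    exacts [(hne (hv' h₁ h₂)).elim, ⟨e₁, h₁.1, e₂, h₂.1, h₁.2, h₂.2, hne⟩,
      ⟨e₂, h₂.1, e₁, h₁.1, h₂.2, h₁.2, hne.symm⟩, (hne (hv'' h₁ h₂)).elim]
  obtain ⟨y, rfl⟩ := Sym2.mem_iff_exists.mp h₁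
  obtain ⟨z, rfl⟩ := Sym2.mem_iff_exists.mp h₂
  have hy : M'.Adj s.v' y := he₁
  have hz : M'.Adj s.v'' z := he₂
  have hyv'' : y ≠ s.v'' := by
    rintro rfl
    exact hne (hv'' ⟨he₁, Sym2.mem_mk_right _ _⟩ ⟨he₂, Sym2.mem_mk_left _ _⟩)
  have hzv' : z ≠ s.v' := by
    rintro rfl
    exact hne (hv' ⟨he₁, Sym2.mem_mk_left _ _⟩ ⟨he₂, Sym2.mem_mk_right _ _⟩)
  obtain ⟨a, rfl⟩ := s.mem_range_of_ne (M'.adj_sub hy).ne' hyv''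
  obtain ⟨b, rfl⟩ := s.mem_range_of_ne hzv' (M'.adj_sub hz).ne'
  exact ⟨(s.adj_emb_v' a).1 (M'.adj_sub hy.symm) ▸ hy.symm,
    b, (s.adj_emb_v'' b).1 (M'.adj_sub hz.symm), hz.symm⟩

theorem ncard_edgeSet_le_matchingNumber_add_one (s : VertexSplit G G') [Finite α]
    {M' : G'.Subgraph} (hM' : M'.IsMatching) : M'.edgeSet.ncard ≤ matchingNumber G + 1 := by
  have := s.finite
  obtain ⟨P, hP, hPadj, hPcard⟩ :=
    hM'.exists_comap_embedding s.emb fun _ _ h => s.adj_of_adj_emb (M'.adj_sub h)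
  rw [← ncard_inter_add_ncard_sdiff_eq_ncard M'.edgeSet (range (Sym2.map s.emb)), ← hPcard]
  have hPle := hP.ncard_edgeSet_le_matchingNumber
  rcases (M'.edgeSet \ range (Sym2.map s.emb)).subsingleton_or_nontrivial with hB | hB
  · have := ncard_le_one_iff_subsingleton.2 hB
    omega
  obtain ⟨hv, b, hbS, hb⟩ := s.exists_adj_of_nontrivial hM' hB
  have hnotMem : ∀ {a x}, M'.Adj (s.emb a) x → x ∉ range s.emb → a ∉ P.verts := by
    intro a x hax hx ha
    obtain ⟨c, hac, -⟩ := hP ha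
    exact hx ⟨c, hM'.eq_of_adj_left ((hPadj a c).1 hac) hax⟩
  have hvb : G.Adj s.v b := s.subset_neighborSet hbS
  have hvP := hnotMem hv s.v'_notMem_range
  have hPvb :=
    (hP.sup_subgraphOfAdj hvb hvP (hnotMem hb s.v''_notMem_range)).ncard_edgeSet_le_matchingNumber
  rw [ncard_edgeSet_sup_subgraphOfAdj hvb hvP] at hPvb
  have := s.ncard_edgeSet_sdiff_range_le_two hM'
  omega

theorem exists_isMatching_ncard_eq_add_one_of_not_exists_adj [Finite α] {M : G.Subgraph}
    (hM : M.IsMatching) (h : ¬∃ u ∈ s.S, M.Adj s.v u) :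
    ∃ M' : G'.Subgraph, M'.IsMatching ∧ M'.edgeSet.ncard = M.edgeSet.ncard + 1 := by
  have := s.finite
  obtain ⟨N, hN, hNverts, hNcard⟩ := hM.exists_map_embedding s.emb fun a b hab =>
    (s.adj_emb_emb a b).2 ⟨M.adj_sub hab, fun ⟨ha, hb⟩ => h ⟨b, hb, ha ▸ hab⟩,
      fun ⟨hb, ha⟩ => h ⟨a, ha, hb ▸ hab.symm⟩⟩
  have hv' : s.v' ∉ N.verts := hNverts ▸ s.v'_notMem_image _
  refine ⟨_, hN.sup_subgraphOfAdj s.adj_v'_v'' hv' (hNverts ▸ s.v''_notMem_image _), ?_⟩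
  rw [ncard_edgeSet_sup_subgraphOfAdj _ hv', hNcard]

theorem exists_isMatching_ncard_eq_add_one_of_adj [Finite α] {M : G.Subgraph}
    (hM : M.IsMatching) {u : α} (huS : u ∈ s.S) (hvu : M.Adj s.v u) :
    ∃ M' : G'.Subgraph, M'.IsMatching ∧ M'.edgeSet.ncard = M.edgeSet.ncard + 1 := by
  have := s.finite
  obtain ⟨N, hN, hNverts, hNcard⟩ := (hM.deleteVerts_of_adj hvu).exists_map_embedding s.emb
    fun a b ⟨⟨_, ha⟩, ⟨_, hb⟩, hab⟩ => (s.adj_emb_emb a b).2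
      ⟨M.adj_sub hab, fun ⟨h, _⟩ => ha (.inl h), fun ⟨h, _⟩ => hb (.inl h)⟩
  have hv' : G'.Adj (s.emb s.v) s.v' := (s.adj_emb_v' s.v).2 rfl
  have hu'' : G'.Adj (s.emb u) s.v'' := (s.adj_emb_v'' u).2 huS
  have hvN : s.emb s.v ∉ N.verts := by simp [hNverts]
  have huN : s.emb u ∉ N.verts := by simp [hNverts]
  have hv'N : s.v' ∉ N.verts := hNverts ▸ s.v'_notMem_image _
  have hv''N : s.v'' ∉ N.verts := hNverts ▸ s.v''_notMem_image _
  have hN₁ := hN.sup_subgraphOfAdj hv' hvN hv'N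
  have huN₁ : s.emb u ∉ (N ⊔ G'.subgraphOfAdj hv').verts := by
    simp [huN, (M.adj_sub hvu).ne', s.emb_ne_v']
  have hv''N₁ : s.v'' ∉ (N ⊔ G'.subgraphOfAdj hv').verts := by
    simp [hv''N, s.emb_ne_v''.symm, s.v'_ne_v''.symm]
  refine ⟨_, hN₁.sup_subgraphOfAdj hu'' huN₁ hv''N₁, ?_⟩
  rw [ncard_edgeSet_sup_subgraphOfAdj _ huN₁, ncard_edgeSet_sup_subgraphOfAdj _ hvN, hNcard,
    ← hM.ncard_edgeSet_deleteVerts_add_one hvu]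

theorem exists_isMatching_ncard_eq_add_one (s : VertexSplit G G') [Finite α] {M : G.Subgraph}
    (hM : M.IsMatching) :
    ∃ M' : G'.Subgraph, M'.IsMatching ∧ M'.edgeSet.ncard = M.edgeSet.ncard + 1 := by
  by_cases h : ∃ u ∈ s.S, M.Adj s.v u
  · obtain ⟨u, huS, hvu⟩ := h
    exact s.exists_isMatching_ncard_eq_add_one_of_adj hM huS hvu
  · exact s.exists_isMatching_ncard_eq_add_one_of_not_exists_adj hM h

end VertexSplit

theorem stmt_2_general {α β : Type*} [Fintype α]
    (G : SimpleGraph α) (G' : SimpleGraph β)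
    (h : IsVertexSplit G G') :
    matchingNumber G' = matchingNumber G + 1 := by
  obtain ⟨s⟩ := h.nonempty
  have := s.finite
  refine le_antisymm
    (matchingNumber_le_of_forall fun _ => s.ncard_edgeSet_le_matchingNumber_add_one) ?_
  obtain ⟨M, hM, hMcard⟩ := exists_isMatching_ncard_edgeSet_eq_matchingNumber G
  obtain ⟨M', hM', hM'card⟩ := s.exists_isMatching_ncard_eq_add_one hM
  rw [← hMcard, ← hM'card]
  exact hM'.ncard_edgeSet_le_matchingNumber

/-- A single vertex split increases the matching number by exactly 1. -/
theorem stmt_2 {α β : Type*} [Fintype α] [Fintype β]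
    (G : SimpleGraph α) (G' : SimpleGraph β)
    (h : IsVertexSplit G G') :
    matchingNumber G' = matchingNumber G + 1 :=
  stmt_2_general G G' h
end

section
/- Let G' be obtained from a finite graph G by a sequence of k vertex splits. Then the matching number of G' equals the matching number of G plus k. -/
/-!
It suffices to show that a single split raises the matching number by one.
A maximum matching of `G` gives a matching of `G'` with one more edge: add `v' v''`, or, if `v`
is matched to some `w ∈ S`, replace `v w` by `v v'` and `w v''`. Conversely, the edges of a
matching of `G'` between old vertices form a matching of `G`, and at most two further edges
touch `v'` or `v''`. As `v'` is adjacent only to `v` and `v''`, there are two of them only when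
`v'` is matched to `v` and `v''` to some `u ∈ S`; then the edge `v u` of `G` can be added.
-/

namespace SimpleGraph

variable {V W : Type*} {G H H₁ H₂ : SimpleGraph V} {u v : V}

/-- Matchings are handled as spanning graphs in which every vertex has at most one neighbour;
unlike `Subgraph.IsMatching`, this notion is stable under `map`, `comap` and `≤`. -/
def IsMatchingGraph (H : SimpleGraph V) : Prop :=
  ∀ v, (H.neighborSet v).Subsingleton

namespace IsMatchingGraph

theorem eq_of_adj (hH : H.IsMatchingGraph) {x y z : V} (hy : H.Adj x y) (hz : H.Adj x z) :
    y = z :=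
  hH x hy hz

theorem mono (hH : H₂.IsMatchingGraph) (h : H₁ ≤ H₂) : H₁.IsMatchingGraph :=
  fun v _ hx _ hy => hH v (h hx) (h hy)

theorem map (hH : H.IsMatchingGraph) (f : V ↪ W) : (H.map f).IsMatchingGraph := by
  rintro _ _ ⟨-, a, b, hab, rfl, rfl⟩ _ ⟨-, a', c, hac, ha, rfl⟩
  cases f.injective ha
  rw [hH a hab hac]

theorem comap (hH : H.IsMatchingGraph) {f : W → V} (hf : f.Injective) :
    (H.comap f).IsMatchingGraph :=
  fun x _ hy _ hz => hf (hH (f x) hy hz)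

theorem sup_edge (hH : H.IsMatchingGraph) (hu : u ∉ H.support) (hv : v ∉ H.support) :
    (H ⊔ edge u v).IsMatchingGraph := by
  intro x y hy z hz
  simp only [mem_support, not_exists] at hu hv
  simp only [neighborSet_sup, Set.mem_union, mem_neighborSet, edge_adj] at hy hz
  grind [eq_of_adj]

theorem ncard_incidenceSet_le_one (hH : H.IsMatchingGraph) (v : V) :
    (H.incidenceSet v).ncard ≤ 1 := by
  classical
  have : Subsingleton (H.incidenceSet v) :=
    (H.incidenceSetEquivNeighborSet v).subsingleton_congr.2 (hH v).coe_sort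
  exact Set.ncard_le_one_iff_subsingleton.2 (Set.subsingleton_coe _ |>.1 this)

end IsMatchingGraph

theorem ncard_edgeSet_map (f : V ↪ W) (H : SimpleGraph V) :
    (H.map f).edgeSet.ncard = H.edgeSet.ncard := by
  rw [edgeSet_map, Set.ncard_image_of_injective _ f.sym2Map.injective]

theorem ncard_edgeSet_sup_edge [Finite V] (hu : u ∉ H.support) (hne : u ≠ v) :
    (H ⊔ edge u v).edgeSet.ncard = H.edgeSet.ncard + 1 := by
  rw [edgeSet_sup, edgeSet_edge_of_ne hne, Set.union_singleton, Set.ncard_insert_of_notMem]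
  exact fun h => hu ⟨v, h⟩

theorem notMem_support_sup_edge {x : V} (hx : x ∉ H.support) (hu : x ≠ u) (hv : x ≠ v) :
    x ∉ (H ⊔ edge u v).support := by
  rw [mem_support]
  rintro ⟨y, hy⟩
  rw [sup_adj, edge_adj] at hy
  grind [mem_support]

theorem Subgraph.IsMatching.isMatchingGraph_spanningCoe {M : G.Subgraph} (hM : M.IsMatching) :
    M.spanningCoe.IsMatchingGraph :=
  fun _ _ hy _ hz => hM.eq_of_adj_left hy hz

theorem IsMatchingGraph.exists_isMatching (hH : H.IsMatchingGraph) (hle : H ≤ G) :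
    ∃ M : G.Subgraph, M.IsMatching ∧ M.edgeSet = H.edgeSet :=
  ⟨{ verts := H.support, Adj := H.Adj, adj_sub := fun h => hle h,
      edge_vert := fun h => ⟨_, h⟩, symm := H.symm },
    fun _ ⟨w, hw⟩ => ⟨w, hw, fun _ h => hH _ h hw⟩, rfl⟩

theorem bddAbove_ncard_edgeSet_isMatching [Finite V] (G : SimpleGraph V) :
    BddAbove {n | ∃ M : G.Subgraph, M.IsMatching ∧ M.edgeSet.ncard = n} :=
  ⟨Nat.card (Sym2 V), by rintro _ ⟨M, -, rfl⟩; exact Set.ncard_le_card _⟩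

theorem IsMatchingGraph.ncard_edgeSet_le_matchingNumber [Finite V] (hH : H.IsMatchingGraph)
    (hle : H ≤ G) : H.edgeSet.ncard ≤ matchingNumber G := by
  obtain ⟨M, hM, hMH⟩ := hH.exists_isMatching hle
  exact le_csSup (bddAbove_ncard_edgeSet_isMatching G) ⟨M, hM, by rw [hMH]⟩

theorem exists_isMatchingGraph_ncard_edgeSet_eq_matchingNumber [Finite V] (G : SimpleGraph V) :
    ∃ H ≤ G, H.IsMatchingGraph ∧ H.edgeSet.ncard = matchingNumber G := by
  have hne : {n | ∃ M : G.Subgraph, M.IsMatching ∧ M.edgeSet.ncard = n}.Nonempty :=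
    ⟨0, ⊥, by simp [Subgraph.IsMatching]⟩
  obtain ⟨M, hM, hcard⟩ := Nat.sSup_mem hne (bddAbove_ncard_edgeSet_isMatching G)
  exact ⟨M.spanningCoe, M.spanningCoe_le, hM.isMatchingGraph_spanningCoe,
    by rw [Subgraph.edgeSet_spanningCoe, hcard]; rfl⟩

end SimpleGraph

open SimpleGraph

variable {α β : Type*}

structure VertexSplit_s3 (G : SimpleGraph α) (G' : SimpleGraph β) where
  f : α ↪ β
  v : α
  v' : β
  v'' : β
  S : Set α
  subset_neighborSet : S ⊆ G.neighborSet v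
  v'_ne_v'' : v' ≠ v''
  v'_notMem_range : v' ∉ Set.range f
  v''_notMem_range : v'' ∉ Set.range f
  range_union : Set.range f ∪ {v', v''} = Set.univ
  adj_f_f (u w : α) :
    G'.Adj (f u) (f w) ↔ G.Adj u w ∧ ¬(u = v ∧ w ∈ S) ∧ ¬(w = v ∧ u ∈ S)
  adj_f_v' (u : α) : G'.Adj (f u) v' ↔ u = v
  adj_f_v'' (u : α) : G'.Adj (f u) v'' ↔ u ∈ S
  adj_v'_v'' : G'.Adj v' v''

theorem IsVertexSplit.nonempty_vertexSplit {G : SimpleGraph α} {G' : SimpleGraph β}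
    (h : IsVertexSplit G G') : Nonempty (VertexSplit_s3 G G') :=
  let ⟨f, v, v', v'', S, h₁, h₂, h₃, h₄, h₅, h₆, h₇, h₈, h₉⟩ := h
  ⟨⟨f, v, v', v'', S, h₁, h₂, h₃, h₄, h₅, h₆, h₇, h₈, h₉⟩⟩

namespace VertexSplit_s3

variable {G : SimpleGraph α} {G' : SimpleGraph β}

theorem f_ne_v' (s : VertexSplit_s3 G G') (u : α) : s.f u ≠ s.v' :=
  fun h => s.v'_notMem_range ⟨u, h⟩

theorem f_ne_v'' (s : VertexSplit_s3 G G') (u : α) : s.f u ≠ s.v'' :=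
  fun h => s.v''_notMem_range ⟨u, h⟩

theorem mem_range_or_eq (s : VertexSplit_s3 G G') (b : β) :
    b ∈ Set.range s.f ∨ b = s.v' ∨ b = s.v'' := by
  have := s.range_union ▸ Set.mem_univ b
  simpa only [Set.mem_union, Set.mem_insert_iff, Set.mem_singleton_iff] using this

theorem eq_or_eq_of_adj_v' (s : VertexSplit_s3 G G') {y : β} (h : G'.Adj s.v' y) :
    y = s.f s.v ∨ y = s.v'' := by
  rcases s.mem_range_or_eq y with ⟨u, rfl⟩ | rfl | rfl
  · exact .inl (by rw [(s.adj_f_v' u).1 h.symm])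
  · exact (h.ne rfl).elim
  · exact .inr rfl

theorem eq_or_exists_of_adj_v'' (s : VertexSplit_s3 G G') {y : β} (h : G'.Adj s.v'' y) :
    y = s.v' ∨ ∃ u ∈ s.S, y = s.f u := by
  rcases s.mem_range_or_eq y with ⟨u, rfl⟩ | rfl | rfl
  · exact .inr ⟨u, (s.adj_f_v'' u).1 h.symm, rfl⟩
  · exact .inl rfl
  · exact (h.ne rfl).elim

theorem comap_le (s : VertexSplit_s3 G G') : G'.comap s.f ≤ G :=
  fun u w h => ((s.adj_f_f u w).1 h).1

theorem le_comap (s : VertexSplit_s3 G G') {H : SimpleGraph α} (hle : H ≤ G)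
    (hv : ∀ w ∈ s.S, ¬H.Adj s.v w) : H ≤ G'.comap s.f := fun u w h =>
  (s.adj_f_f u w).2
    ⟨hle h, fun ⟨hu, hw⟩ => hv w hw (hu ▸ h), fun ⟨hw, hu⟩ => hv u hu (hw ▸ h.symm)⟩

theorem v'_notMem_support_map (s : VertexSplit_s3 G G') (H : SimpleGraph α) :
    s.v' ∉ (H.map s.f).support := by
  rw [support_map]
  rintro ⟨u, -, h⟩
  exact s.f_ne_v' u h

theorem v''_notMem_support_map (s : VertexSplit_s3 G G') (H : SimpleGraph α) :
    s.v'' ∉ (H.map s.f).support := by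
  rw [support_map]
  rintro ⟨u, -, h⟩
  exact s.f_ne_v'' u h

theorem edgeSet_subset (s : VertexSplit_s3 G G') (H' : SimpleGraph β) : H'.edgeSet ⊆
    ((H'.comap s.f).map s.f).edgeSet ∪ (H'.incidenceSet s.v' ∪ H'.incidenceSet s.v'') := by
  rintro ⟨x, y⟩ h
  rcases s.mem_range_or_eq x with ⟨a, rfl⟩ | rfl | rfl
  · rcases s.mem_range_or_eq y with ⟨b, rfl⟩ | rfl | rfl
    · exact .inl ((map_adj_apply (G := H'.comap s.f)).2 h)
    · exact .inr (.inl ⟨h, Sym2.mem_mk_right _ _⟩)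
    · exact .inr (.inr ⟨h, Sym2.mem_mk_right _ _⟩)
  · exact .inr (.inl ⟨h, Sym2.mem_mk_left _ _⟩)
  · exact .inr (.inr ⟨h, Sym2.mem_mk_left _ _⟩)

variable [Finite β] {H : SimpleGraph α}

theorem exists_ncard_eq_add_one_of_forall_not_adj (s : VertexSplit_s3 G G') (hH : H.IsMatchingGraph)
    (hle : H ≤ G) (hv : ∀ w ∈ s.S, ¬H.Adj s.v w) :
    ∃ H' ≤ G', H'.IsMatchingGraph ∧ H'.edgeSet.ncard = H.edgeSet.ncard + 1 := by
  have hv' := s.v'_notMem_support_map H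
  refine ⟨H.map s.f ⊔ edge s.v' s.v'',
    sup_le ((map_le_iff_le_comap ..).2 (s.le_comap hle hv))
      ((edge_le_iff _).2 (.inr s.adj_v'_v'')),
    (hH.map s.f).sup_edge hv' (s.v''_notMem_support_map H), ?_⟩
  rw [ncard_edgeSet_sup_edge hv' s.v'_ne_v'', ncard_edgeSet_map]

theorem exists_ncard_eq_add_one_of_adj (s : VertexSplit_s3 G G') {w : α} (hH : H.IsMatchingGraph)
    (hle : H ≤ G) (hw : w ∈ s.S) (hvw : H.Adj s.v w) :
    ∃ H' ≤ G', H'.IsMatchingGraph ∧ H'.edgeSet.ncard = H.edgeSet.ncard + 1 := by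
  set H₀ := H \ edge s.v w
  have hH₀ : H₀.IsMatchingGraph := hH.mono sdiff_le
  have hv : s.v ∉ H₀.support := by
    rintro ⟨x, hx, hne⟩
    obtain rfl := hH.eq_of_adj hx hvw
    exact hne ((edge_adj ..).2 ⟨.inl ⟨rfl, rfl⟩, hvw.ne⟩)
  have hw₀ : w ∉ H₀.support := by
    rintro ⟨x, hx, hne⟩
    obtain rfl := hH.eq_of_adj hx hvw.symm
    exact hne ((edge_adj ..).2 ⟨.inr ⟨rfl, rfl⟩, hvw.ne.symm⟩)
  have hle₀ : H₀ ≤ G'.comap s.f := s.le_comap (sdiff_le.trans hle)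
    fun x _ hx => hv ⟨x, hx⟩
  have hfv : s.f s.v ∉ (H₀.map s.f).support := by
    rw [support_map]
    rintro ⟨x, hx, h⟩
    exact hv (s.f.injective h ▸ hx)
  have hfw : s.f w ∉ (H₀.map s.f).support := by
    rw [support_map]
    rintro ⟨x, hx, h⟩
    exact hw₀ (s.f.injective h ▸ hx)
  set H₁ := H₀.map s.f ⊔ edge (s.f s.v) s.v'
  have hfw₁ : s.f w ∉ H₁.support :=
    notMem_support_sup_edge hfw (s.f.injective.ne hvw.ne.symm) (s.f_ne_v' w)
  have hv''₁ : s.v'' ∉ H₁.support :=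
    notMem_support_sup_edge (s.v''_notMem_support_map H₀) (s.f_ne_v'' _).symm s.v'_ne_v''.symm
  refine ⟨H₁ ⊔ edge (s.f w) s.v'',
    sup_le (sup_le ((map_le_iff_le_comap ..).2 hle₀)
      ((edge_le_iff _).2 (.inr ((s.adj_f_v' _).2 rfl))))
      ((edge_le_iff _).2 (.inr ((s.adj_f_v'' w).2 hw))),
    ((hH₀.map s.f).sup_edge hfv (s.v'_notMem_support_map H₀)).sup_edge hfw₁ hv''₁, ?_⟩
  have := Finite.of_injective s.f s.f.injective
  have hdel : H₀.edgeSet.ncard + 1 = H.edgeSet.ncard := by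
    rw [edgeSet_sdiff, edgeSet_edge_of_ne hvw.ne]
    exact Set.ncard_sdiff_singleton_add_one hvw (Set.toFinite _)
  rw [ncard_edgeSet_sup_edge hfw₁ (s.f_ne_v'' w), ncard_edgeSet_sup_edge hfv (s.f_ne_v' _),
    ncard_edgeSet_map, ← hdel]

theorem add_one_le_matchingNumber (s : VertexSplit_s3 G G') :
    matchingNumber G + 1 ≤ matchingNumber G' := by
  have := Finite.of_injective s.f s.f.injective
  obtain ⟨H, hle, hH, hcard⟩ := exists_isMatchingGraph_ncard_edgeSet_eq_matchingNumber G
  obtain ⟨H', hle', hH', hcard'⟩ :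
      ∃ H' ≤ G', H'.IsMatchingGraph ∧ H'.edgeSet.ncard = H.edgeSet.ncard + 1 := by
    by_cases hv : ∃ w ∈ s.S, H.Adj s.v w
    · obtain ⟨w, hw, hvw⟩ := hv
      exact s.exists_ncard_eq_add_one_of_adj hH hle hw hvw
    · push Not at hv
      exact s.exists_ncard_eq_add_one_of_forall_not_adj hH hle hv
  rw [← hcard, ← hcard']
  exact hH'.ncard_edgeSet_le_matchingNumber hle'

theorem ncard_edgeSet_le (s : VertexSplit_s3 G G') (H' : SimpleGraph β) : H'.edgeSet.ncard ≤
    (H'.comap s.f).edgeSet.ncard + (H'.incidenceSet s.v' ∪ H'.incidenceSet s.v'').ncard :=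
  calc H'.edgeSet.ncard
    _ ≤ _ := Set.ncard_le_ncard (s.edgeSet_subset H') (Set.toFinite _)
    _ ≤ _ := Set.ncard_union_le _ _
    _ = _ := by rw [ncard_edgeSet_map]

theorem exists_ncard_eq_comap_add_one (s : VertexSplit_s3 G G') {H' : SimpleGraph β} {y : β}
    (hH' : H'.IsMatchingGraph) (hle : H' ≤ G') (hv' : H'.Adj s.v' (s.f s.v))
    (hy : H'.Adj s.v'' y) :
    ∃ H ≤ G, H.IsMatchingGraph ∧ H.edgeSet.ncard = (H'.comap s.f).edgeSet.ncard + 1 := by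
  have := Finite.of_injective s.f s.f.injective
  obtain ⟨u, hu, rfl⟩ : ∃ u ∈ s.S, y = s.f u := by
    refine (s.eq_or_exists_of_adj_v'' (hle hy)).resolve_left ?_
    rintro rfl
    exact s.f_ne_v'' _ (hH'.eq_of_adj hv' hy.symm)
  have hvu : G.Adj s.v u := s.subset_neighborSet hu
  have hv : s.v ∉ (H'.comap s.f).support := fun ⟨x, hx⟩ =>
    s.f_ne_v' x (hH'.eq_of_adj hx hv'.symm)
  have hu' : u ∉ (H'.comap s.f).support := fun ⟨x, hx⟩ =>
    s.f_ne_v'' x (hH'.eq_of_adj hx hy.symm)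
  exact ⟨H'.comap s.f ⊔ edge s.v u,
    sup_le (fun _ _ h => s.comap_le (hle h)) ((edge_le_iff _).2 (.inr hvu)),
    (hH'.comap s.f.injective).sup_edge hv hu', ncard_edgeSet_sup_edge hv hvu.ne⟩

theorem exists_ncard_le_add_one (s : VertexSplit_s3 G G') {H' : SimpleGraph β}
    (hH' : H'.IsMatchingGraph) (hle : H' ≤ G') :
    ∃ H ≤ G, H.IsMatchingGraph ∧ H'.edgeSet.ncard ≤ H.edgeSet.ncard + 1 := by
  have hcount := s.ncard_edgeSet_le H'
  have hH : (H'.comap s.f).IsMatchingGraph := hH'.comap s.f.injective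
  have hHG : H'.comap s.f ≤ G := fun _ _ h => s.comap_le (hle h)
  have h₁ := hH'.ncard_incidenceSet_le_one s.v'
  have h₂ := hH'.ncard_incidenceSet_le_one s.v''
  by_cases hv' : H'.Adj s.v' (s.f s.v)
  · by_cases hv'' : ∃ y, H'.Adj s.v'' y
    · obtain ⟨y, hy⟩ := hv''
      obtain ⟨H, hle, hH, hcard⟩ := s.exists_ncard_eq_comap_add_one hH' hle hv' hy
      have := Set.ncard_union_le (H'.incidenceSet s.v') (H'.incidenceSet s.v'')
      exact ⟨H, hle, hH, by omega⟩
    · have hempty : H'.incidenceSet s.v'' = ∅ := by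
        refine Set.eq_empty_iff_forall_notMem.2 fun e ⟨he, hmem⟩ => ?_
        obtain ⟨y, rfl⟩ := Sym2.mem_iff_exists.1 hmem
        exact hv'' ⟨y, he⟩
      rw [hempty, Set.union_empty] at hcount
      exact ⟨_, hHG, hH, by omega⟩
  · have hsub : H'.incidenceSet s.v' ⊆ H'.incidenceSet s.v'' := by
      rintro e ⟨he, hmem⟩
      obtain ⟨y, rfl⟩ := Sym2.mem_iff_exists.1 hmem
      rcases s.eq_or_eq_of_adj_v' (hle he) with rfl | rfl
      · exact absurd he hv'
      · exact ⟨he, Sym2.mem_mk_right _ _⟩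
    rw [Set.union_eq_right.2 hsub] at hcount
    exact ⟨_, hHG, hH, by omega⟩

theorem matchingNumber_le_add_one (s : VertexSplit_s3 G G') :
    matchingNumber G' ≤ matchingNumber G + 1 := by
  obtain ⟨H', hle', hH', hcard'⟩ := exists_isMatchingGraph_ncard_edgeSet_eq_matchingNumber G'
  obtain ⟨H, hle, hH, hcard⟩ := s.exists_ncard_le_add_one hH' hle'
  have := Finite.of_injective s.f s.f.injective
  have := hH.ncard_edgeSet_le_matchingNumber hle
  omega

theorem matchingNumber_eq (s : VertexSplit_s3 G G') : matchingNumber G' = matchingNumber G + 1 :=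
  s.matchingNumber_le_add_one.antisymm s.add_one_le_matchingNumber

end VertexSplit_s3

/-- A sequence of `k` vertex splits increases the matching number
by exactly `k`. -/
theorem stmt_3 (k : ℕ) (α : Fin (k + 1) → Type) [∀ i, Fintype (α i)]
    (G : ∀ i, SimpleGraph (α i))
    (hsplit : ∀ i : Fin k, IsVertexSplit (G i.castSucc) (G i.succ)) :
    matchingNumber (G (Fin.last k)) = matchingNumber (G 0) + k := by
  have step (i : Fin k) : matchingNumber (G i.succ) = matchingNumber (G i.castSucc) + 1 :=
    let ⟨s⟩ := (hsplit i).nonempty_vertexSplit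
    s.matchingNumber_eq
  suffices ∀ i : Fin (k + 1), matchingNumber (G i) = matchingNumber (G 0) + i by
    simpa using this (Fin.last k)
  intro i
  induction i using Fin.induction with
  | zero => simp
  | succ i ih => rw [step, ih, Fin.val_succ, Fin.val_castSucc, add_assoc]
end

section
/- Let G be a graph whose vertices are partitioned into clusters {U_p}_{p ∈ P} indexed by a set P, such that each induced subgraph G[U_p] is a clique. Let H be a graph on P such that any edge of G between distinct clusters U_p and U_q implies pq ∈ E(H). Then there exists a maximum matching M of G such that for every edge pq of H, M contains at most one edge with one endpoint in U_p and the other in U_q. -/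
/-!
Among the maximum matchings choose one with the fewest edges joining distinct clusters. If two
of its edges `u₁w₁`, `u₂w₂` both ran from `U_p` to `U_q`, the clique edges `u₁u₂ ⊆ U_p` and
`w₁w₂ ⊆ U_q` could replace them: the result is a matching of the same size with two fewer
edges between distinct clusters.
-/

theorem Set.ncard_sdiff_union_of_ncard_eq {α : Type*} {s t r : Set α} (hts : t ⊆ s)
    (hrs : Disjoint r s) (htr : t.ncard = r.ncard) (hs : s.Finite := by toFinite_tac)
    (hr : r.Finite := by toFinite_tac) : (s \ t ∪ r).ncard = s.ncard := by
  rw [Set.ncard_union_eq (hrs.symm.mono_left Set.sdiff_subset) hs.sdiff hr, ← htr,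
    Set.ncard_sdiff_add_ncard_of_subset hts hs]

namespace SimpleGraph.Subgraph

variable {V : Type*} {G : SimpleGraph V} {M : G.Subgraph}

lemma IsMatching.deleteVerts_pair (hM : M.IsMatching) {u w : V} (h : M.Adj u w) :
    (M.deleteVerts {u, w}).IsMatching := by
  rintro v ⟨hv, hvuw⟩
  obtain ⟨x, hvx, hx⟩ := hM hv
  refine ⟨x, deleteVerts_adj.2 ⟨hv, hvuw, M.edge_vert hvx.symm, ?_, hvx⟩,
    fun y hy => hx y (deleteVerts_adj.1 hy).2.2.2.2⟩
  rintro (rfl | rfl)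
  · exact hvuw (Or.inr (hM.eq_of_adj_left hvx.symm h))
  · exact hvuw (Or.inl (hM.eq_of_adj_left hvx.symm h.symm))

lemma IsMatching.edgeSet_deleteVerts_pair (hM : M.IsMatching) {u w : V} (h : M.Adj u w) :
    (M.deleteVerts {u, w}).edgeSet = M.edgeSet \ {s(u, w)} := by
  have hpair {x y : V} (hxy : M.Adj x y) : x ∈ ({u, w} : Set V) → s(x, y) = s(u, w) := by
    rintro (rfl | rfl)
    · rw [hM.eq_of_adj_left hxy h]
    · rw [hM.eq_of_adj_left hxy h.symm, Sym2.eq_swap]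
  ext e
  induction e using Sym2.inductionOn with | hf a b => ?_
  rw [Subgraph.mem_edgeSet, deleteVerts_adj, Set.mem_sdiff, Subgraph.mem_edgeSet,
    Set.mem_singleton_iff]
  constructor
  · rintro ⟨-, ha, -, -, hab⟩
    refine ⟨hab, fun he => ha ?_⟩
    rcases Sym2.eq_iff.1 he with ⟨rfl, -⟩ | ⟨rfl, -⟩ <;> simp
  · rintro ⟨hab, hne⟩
    exact ⟨M.edge_vert hab, fun ha => hne (hpair hab ha), M.edge_vert hab.symm,
      fun hb => hne (Sym2.eq_swap.trans (hpair hab.symm hb)), hab⟩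

lemma IsMatching.sup_subgraphOfAdj_s6 (hM : M.IsMatching) {u w : V} (h : G.Adj u w)
    (hu : u ∉ M.verts) (hw : w ∉ M.verts) : (M ⊔ G.subgraphOfAdj h).IsMatching := by
  refine hM.sup (.subgraphOfAdj h) ?_
  rw [support_subgraphOfAdj, Set.disjoint_left]
  rintro x hx (rfl | rfl)
  exacts [hu (M.support_subset_verts hx), hw (M.support_subset_verts hx)]

lemma IsMatching.exists_swap [Finite V] (hM : M.IsMatching) {u₁ w₁ u₂ w₂ : V}
    (h₁ : M.Adj u₁ w₁) (h₂ : M.Adj u₂ w₂) (hu : G.Adj u₁ u₂) (hw : G.Adj w₁ w₂)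
    (hne : u₁ ≠ w₂) :
    ∃ M' : G.Subgraph, M'.IsMatching ∧ M'.edgeSet.ncard = M.edgeSet.ncard ∧
      M'.edgeSet = M.edgeSet \ {s(u₁, w₁), s(u₂, w₂)} ∪ {s(u₁, u₂), s(w₁, w₂)} := by
  have hne' : u₂ ≠ w₁ := fun h => hne (hM.eq_of_adj_left h₁.symm (h ▸ h₂))
  have h₂' : (M.deleteVerts {u₁, w₁}).Adj u₂ w₂ := by
    refine deleteVerts_adj.2 ⟨M.edge_vert h₂, ?_, M.edge_vert h₂.symm, ?_, h₂⟩ <;>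
      simp [hu.ne.symm, hne', hne.symm, hw.ne.symm]
  let M₁ := (M.deleteVerts {u₁, w₁}).deleteVerts {u₂, w₂}
  have hM₁ : M₁.IsMatching := (hM.deleteVerts_pair h₁).deleteVerts_pair h₂'
  have hE : (M₁ ⊔ G.subgraphOfAdj hu ⊔ G.subgraphOfAdj hw).edgeSet =
      M.edgeSet \ {s(u₁, w₁), s(u₂, w₂)} ∪ {s(u₁, u₂), s(w₁, w₂)} := by
    rw [edgeSet_sup, edgeSet_sup, edgeSet_subgraphOfAdj, edgeSet_subgraphOfAdj,
      (hM.deleteVerts_pair h₁).edgeSet_deleteVerts_pair h₂', hM.edgeSet_deleteVerts_pair h₁,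
      Set.sdiff_sdiff, Set.union_assoc, Set.singleton_union, Set.singleton_union]
  refine ⟨_, ?_, ?_, hE⟩
  · refine (hM₁.sup_subgraphOfAdj_s6 hu ?_ ?_).sup_subgraphOfAdj_s6 hw ?_ ?_ <;>
      simp [M₁, h₁.ne.symm, h₂.ne.symm, hne.symm, hne'.symm]
  · rw [hE]
    refine Set.ncard_sdiff_union_of_ncard_eq (Set.pair_subset h₁ h₂) ?_ ?_
    · rw [Set.disjoint_left]
      rintro e (rfl | rfl)
      exacts [hM.not_adj_left_of_ne hne'.symm h₁, hM.not_adj_left_of_ne hne h₁.symm]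
    · rw [Set.ncard_pair, Set.ncard_pair] <;> simp [hu.ne, hne, h₁.ne]

lemma exists_maximum_isMatching_minimizing [Finite V] {β : Type*} [LinearOrder β]
    (f : G.Subgraph → β) :
    ∃ M : G.Subgraph, M.IsMatching ∧
      (∀ M' : G.Subgraph, M'.IsMatching → M'.edgeSet.ncard ≤ M.edgeSet.ncard) ∧
      ∀ M' : G.Subgraph, M'.IsMatching → M'.edgeSet.ncard = M.edgeSet.ncard → f M ≤ f M' := by
  have hbot : (⊥ : G.Subgraph).IsMatching := fun v hv => absurd hv (Set.notMem_empty v)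
  obtain ⟨M₀, hM₀, hmax⟩ := Set.exists_max_image {M : G.Subgraph | M.IsMatching}
    (·.edgeSet.ncard) (Set.toFinite _) ⟨⊥, hbot⟩
  obtain ⟨M, ⟨hM, hcard⟩, hmin⟩ := Set.exists_min_image
    {M : G.Subgraph | M.IsMatching ∧ M.edgeSet.ncard = M₀.edgeSet.ncard} f (Set.toFinite _)
    ⟨M₀, hM₀, rfl⟩
  exact ⟨M, hM, fun M' hM' => hcard ▸ hmax M' hM', fun M' hM' h => hmin M' ⟨hM', h.trans hcard⟩⟩

variable {P : Type*}

def crossEdges (M : G.Subgraph) (f : V → P) : Set (Sym2 V) :=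
  {e ∈ M.edgeSet | ¬(e.map f).IsDiag}

lemma crossEdges_ssubset {M M' : G.Subgraph} {f : V → P} {e : Sym2 V}
    (he : e ∈ M.crossEdges f) (hsub : M'.edgeSet ⊆ M.edgeSet \ {e} ∪ {x | (x.map f).IsDiag}) :
    M'.crossEdges f ⊂ M.crossEdges f := by
  refine (Set.ssubset_iff_of_subset ?_).2 ⟨e, he, ?_⟩
  · rintro x ⟨hx, hxd⟩
    exact ⟨((hsub hx).resolve_right hxd).1, hxd⟩
  · rintro ⟨he', hd⟩
    rcases hsub he' with ⟨-, hne⟩ | hd'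
    exacts [hne rfl, hd hd']

end SimpleGraph.Subgraph

open SimpleGraph Subgraph

theorem stmt_6_general {V P : Type*} [Fintype V] (G : SimpleGraph V)
    (cluster : V → P)
    (hclique : ∀ u w : V, cluster u = cluster w → u ≠ w → G.Adj u w)
    (H : SimpleGraph P) :
    ∃ M : G.Subgraph, M.IsMatching ∧
      (∀ M' : G.Subgraph, M'.IsMatching → M'.edgeSet.ncard ≤ M.edgeSet.ncard) ∧
      (∀ p q : P, H.Adj p q →
        {e ∈ M.edgeSet | ∃ u w : V, e = s(u, w) ∧ cluster u = p ∧ cluster w = q}.ncard ≤ 1) := by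
  obtain ⟨M, hM, hmax, hmin⟩ :=
    exists_maximum_isMatching_minimizing (G := G) fun M => (M.crossEdges cluster).ncard
  refine ⟨M, hM, hmax, fun p q hpq => ?_⟩
  by_contra! h
  obtain ⟨e₁, e₂, ⟨h₁, u₁, w₁, rfl, rfl, rfl⟩, ⟨h₂, u₂, w₂, rfl, hu, hw⟩, hne⟩ :=
    (Set.one_lt_ncard_iff (Set.toFinite _)).1 h
  rw [Subgraph.mem_edgeSet] at h₁ h₂
  have huu : u₁ ≠ u₂ := fun h => hne (by subst h; rw [hM.eq_of_adj_left h₁ h₂])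
  have hww : w₁ ≠ w₂ := fun h => hne (by subst h; rw [hM.eq_of_adj_right h₁ h₂])
  obtain ⟨M', hM', hcard, hE⟩ := hM.exists_swap h₁ h₂ (hclique _ _ hu.symm huu)
    (hclique _ _ hw.symm hww) fun h => hpq.ne (h ▸ hw)
  have hcross : s(u₁, w₁) ∈ M.crossEdges cluster := ⟨h₁, by simpa using hpq.ne⟩
  have hsub : M'.edgeSet ⊆ M.edgeSet \ {s(u₁, w₁)} ∪ {e | (e.map cluster).IsDiag} := by
    rw [hE]
    exact Set.union_subset_union (Set.sdiff_subset_sdiff_right (by simp))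
      (Set.pair_subset (by simp [hu]) (by simp [hw]))
  exact (hmin M' hM' hcard).not_gt (Set.ncard_lt_ncard (crossEdges_ssubset hcross hsub))

/-- If the vertices of a finite graph `G` are partitioned into
clusters (fibers of `cluster`), each inducing a clique, and a pattern graph `H`
on the cluster indices contains an edge `pq` whenever there is an edge of `G`
between clusters `p` and `q`, then some maximum matching of `G` uses at most one
edge between any two clusters joined in `H`. -/
theorem stmt_6 {V P : Type*} [Fintype V] (G : SimpleGraph V)
    (cluster : V → P)
    (hclique : ∀ u w : V, cluster u = cluster w → u ≠ w → G.Adj u w)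
    (H : SimpleGraph P)
    (hH : ∀ u w : V, G.Adj u w → cluster u ≠ cluster w →
      H.Adj (cluster u) (cluster w)) :
    ∃ M : G.Subgraph, M.IsMatching ∧
      (∀ M' : G.Subgraph, M'.IsMatching → M'.edgeSet.ncard ≤ M.edgeSet.ncard) ∧
      (∀ p q : P, H.Adj p q →
        {e ∈ M.edgeSet | ∃ u w : V, e = s(u, w) ∧ cluster u = p ∧ cluster w = q}.ncard ≤ 1) :=
  stmt_6_general G cluster hclique H
end
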